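/- arXiv:2407.18081 — 3 statements merged into one kernel-verified Lean document; each statement's English description precedes it below -/
import Mathlib

section
/- Let x : [0,t_f] → ℝ be twice continuously differentiable, let K, N ≥ 1, and let 0 = t_0 < t_1 < ... < t_K = t_f be knots satisfying t_k − t_{k−1} ≤ C_t/K for all k, where C_t > 0. Let x_M be the composite Bernstein approximant of x with K segments of degree N. Then |∫₀^{t_f} x_M(t) dt − ∫₀^{t_f} x(t) dt| ≤ C/(K²N), where C = (C_t³/8)·sup_{τ∈[0,t_f]}|x''(τ)|. -/
/-!
On a segment `[a, b]` the Bernstein weights `b_{j,N}(t)` are nonnegative, sum to one and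
reproduce linear functions, so `x_M(t) - x(t) = Σ_j (x(t_j) - x(t) - x'(t)(t_j - t)) b_{j,N}(t)`.
Each Taylor remainder is at most `(M/2)(t_j - t)²` with `M = sup |x''|`, and the second moment
`Σ_j (t_j - t)² b_{j,N}(t) = (t - a)(b - t)/N ≤ (b - a)²/(4N)` is the variance of the binomial
distribution. Integrating over a segment of length at most `C_t/K` and summing `K` segments gives
`K · M (C_t/K)³/(8N)`.
-/

/-- Bernstein basis polynomial of degree `N`, index `j`, on `[a,b]`:
`b_{j,N}(t) = (N choose j) (t-a)^j (b-t)^(N-j) / (b-a)^N`. -/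
noncomputable def bern (a b : ℝ) (N j : ℕ) (t : ℝ) : ℝ :=
  (N.choose j : ℝ) * (t - a) ^ j * (b - t) ^ (N - j) / (b - a) ^ N

/-- The polynomial piece of the composite Bernstein approximant on a segment `[a,b]`:
`Σ_{j=0}^N x(a + j(b−a)/N) b_{j,N}(t)`. -/
noncomputable def bernApprox (x : ℝ → ℝ) (a b : ℝ) (N : ℕ) (t : ℝ) : ℝ :=
  ∑ j ∈ Finset.range (N + 1), x (a + (j : ℝ) * (b - a) / (N : ℝ)) * bern a b N j t

open Set MeasureTheory intervalIntegral
open scoped NNReal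

theorem monotoneOn_Iic_of_le_succ {α : Type*} [Preorder α] {f : ℕ → α} {n : ℕ}
    (hf : ∀ k < n, f k ≤ f (k + 1)) : MonotoneOn f (Iic n) := by
  intro i _ j hj hij
  induction hij with
  | refl => rfl
  | step _ ih => exact (ih (Nat.le_of_succ_le hj)).trans (hf _ hj)

section Taylor

variable {s : Set ℝ} {f f' : ℝ → ℝ} {L : ℝ≥0} {u v : ℝ}

theorem abs_sub_sub_mul_le_of_le (hs : Convex ℝ s)
    (hf : ∀ w ∈ s, HasDerivWithinAt f (f' w) s w)
    (hlip : LipschitzOnWith L f' s) (hu : u ∈ s) (hv : v ∈ s) (huv : u ≤ v) :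
    |f v - f u - f' u * (v - u)| ≤ L / 2 * (v - u) ^ 2 := by
  have hsub : Icc u v ⊆ s := hs.ordConnected.out hu hv
  have hderiv : ∀ w ∈ Icc u v,
      HasDerivWithinAt (fun w => f w - f u - f' u * (w - u)) (f' w - f' u) (Icc u v) w := by
    intro w hw
    have hlin : HasDerivAt (fun w => f' u * (w - u)) (f' u) w := by
      simpa using ((hasDerivAt_id w).sub_const u).const_mul (f' u)
    exact (((hf w (hsub hw)).mono hsub).sub_const (f u)).sub hlin.hasDerivWithinAt
  -- Fencing: the remainder starts at 0 and its derivative is bounded by that of `L/2 (w - u)²`.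
  refine image_norm_le_of_norm_deriv_right_le_deriv_boundary
    (fun w hw => (hderiv w hw).continuousWithinAt)
    (fun w hw => (hderiv w (Ico_subset_Icc_self hw)).mono_of_mem_nhdsWithin
      (Icc_mem_nhdsGE_of_mem hw)) (B := fun w => L / 2 * (w - u) ^ 2) (by simp)
    (B' := fun w => L * (w - u)) (fun w => ?_) (fun w hw => ?_) ⟨huv, le_rfl⟩
  · exact ((((hasDerivAt_id' w).sub_const u).pow 2).const_mul ((L : ℝ) / 2)).congr_deriv
      (by ring)
  have hw' := Ico_subset_Icc_self hw
  simpa [Real.dist_eq, abs_of_nonneg (sub_nonneg.2 hw'.1)] using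
    hlip.dist_le_mul w (hsub hw') u hu

theorem abs_sub_sub_mul_le (hs : Convex ℝ s) (hf : ∀ w ∈ s, HasDerivWithinAt f (f' w) s w)
    (hlip : LipschitzOnWith L f' s) (hu : u ∈ s) (hv : v ∈ s) :
    |f v - f u - f' u * (v - u)| ≤ L / 2 * (v - u) ^ 2 := by
  rcases le_total u v with huv | hvu
  · exact abs_sub_sub_mul_le_of_le hs hf hlip hu hv huv
  -- For `v ≤ u`, apply the ordered case to `w ↦ f (-w)` on `-s`.
  have hf_neg : ∀ w ∈ -s, HasDerivWithinAt (fun w => f (-w)) (-f' (-w)) (-s) w := fun w hw => by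
    have h := (hf (-w) hw).scomp w (hasDerivAt_neg w).hasDerivWithinAt (fun z hz => hz)
    rwa [neg_one_smul] at h
  have hlip_neg : LipschitzOnWith L (fun w => -f' (-w)) (-s) :=
    LipschitzOnWith.of_dist_le_mul fun w hw z hz => by
      simpa only [dist_neg_neg] using hlip.dist_le_mul (-w) hw (-z) hz
  have := abs_sub_sub_mul_le_of_le hs.neg hf_neg hlip_neg (neg_mem_neg.2 hu) (neg_mem_neg.2 hv)
    (neg_le_neg hvu)
  simp only [neg_neg] at this
  convert this using 2 <;> ring

end Taylor

section Bernstein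

variable {a b : ℝ} {N : ℕ}

theorem bern_eq_eval_bernsteinPolynomial (hab : a < b) {j : ℕ} (hj : j ≤ N) (t : ℝ) :
    bern a b N j t = (bernsteinPolynomial ℝ N j).eval ((t - a) / (b - a)) := by
  have hba : b - a ≠ 0 := (sub_pos.2 hab).ne'
  have h1 : 1 - (t - a) / (b - a) = (b - t) / (b - a) := by field_simp; ring
  simp only [bern, bernsteinPolynomial, Polynomial.eval_mul, Polynomial.eval_pow,
    Polynomial.eval_natCast, Polynomial.eval_sub, Polynomial.eval_one, Polynomial.eval_X, h1,
    div_pow]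
  rw [← Nat.add_sub_cancel' hj, pow_add, Nat.add_sub_cancel_left]
  field_simp

theorem sum_mul_bern_eq_sum_mul_eval (hab : a < b) (g : ℕ → ℝ) (t : ℝ) :
    ∑ j ∈ Finset.range (N + 1), g j * bern a b N j t
      = ∑ j ∈ Finset.range (N + 1),
          g j * (bernsteinPolynomial ℝ N j).eval ((t - a) / (b - a)) :=
  Finset.sum_congr rfl fun j hj => by
    rw [bern_eq_eval_bernsteinPolynomial hab (Nat.lt_succ_iff.1 (Finset.mem_range.1 hj))]

theorem sum_bern_eq_one (hab : a < b) (t : ℝ) :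
    ∑ j ∈ Finset.range (N + 1), bern a b N j t = 1 := by
  have hsum := congrArg (Polynomial.eval ((t - a) / (b - a))) (bernsteinPolynomial.sum ℝ N)
  simp only [Polynomial.eval_finsetSum, Polynomial.eval_one] at hsum
  simpa using (sum_mul_bern_eq_sum_mul_eval (N := N) hab (fun _ => 1) t).trans (by simpa using hsum)

theorem sum_node_sub_mul_bern (hab : a < b) (hN : N ≠ 0) (t : ℝ) :
    ∑ j ∈ Finset.range (N + 1), (a + j * (b - a) / N - t) * bern a b N j t = 0 := by
  set p := (t - a) / (b - a) with hp
  have hba : b - a ≠ 0 := (sub_pos.2 hab).ne'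
  have hsum := congrArg (Polynomial.eval p) (bernsteinPolynomial.sum ℝ N)
  have hmean := congrArg (Polynomial.eval p) (bernsteinPolynomial.sum_smul ℝ N)
  simp only [Polynomial.eval_finsetSum, Polynomial.eval_mul, Polynomial.eval_natCast,
    Polynomial.eval_one, Polynomial.eval_X, nsmul_eq_mul] at hsum hmean
  set B := fun j => (bernsteinPolynomial ℝ N j).eval p
  have hnode : ∀ j : ℕ, a + j * (b - a) / N - t = (b - a) / N * j - (b - a) / N * (N * p) := by
    intro j; rw [hp]; field_simp; ring
  rw [sum_mul_bern_eq_sum_mul_eval hab]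
  calc ∑ j ∈ Finset.range (N + 1), (a + j * (b - a) / N - t) * B j
      = ∑ j ∈ Finset.range (N + 1), ((b - a) / N * (j * B j) - (b - a) / N * (N * p) * B j) :=
        Finset.sum_congr rfl fun j _ => by rw [hnode]; ring
    _ = (b - a) / N * ∑ j ∈ Finset.range (N + 1), j * B j
          - (b - a) / N * (N * p) * ∑ j ∈ Finset.range (N + 1), B j := by
        rw [Finset.sum_sub_distrib, Finset.mul_sum, Finset.mul_sum]
    _ = 0 := by rw [hmean, hsum]; ring

theorem sum_node_sub_sq_mul_bern (hab : a < b) (hN : N ≠ 0) (t : ℝ) :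
    ∑ j ∈ Finset.range (N + 1), (a + j * (b - a) / N - t) ^ 2 * bern a b N j t
      = (t - a) * (b - t) / N := by
  set p := (t - a) / (b - a) with hp
  have hba : b - a ≠ 0 := (sub_pos.2 hab).ne'
  have hvar := congrArg (Polynomial.eval p) (bernsteinPolynomial.variance ℝ N)
  simp only [Polynomial.eval_finsetSum, Polynomial.eval_mul, Polynomial.eval_pow,
    Polynomial.eval_sub, Polynomial.eval_natCast, Polynomial.eval_one,
    Polynomial.eval_X, nsmul_eq_mul] at hvar
  have hnode : ∀ j : ℕ,
      (a + j * (b - a) / N - t) ^ 2 = ((b - a) / N) ^ 2 * (N * p - j) ^ 2 := by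
    intro j; rw [hp]; field_simp; ring
  rw [sum_mul_bern_eq_sum_mul_eval hab]
  simp only [hnode, mul_assoc]
  rw [← Finset.mul_sum, hvar, hp]
  field_simp
  ring

theorem bern_nonneg {j : ℕ} {t : ℝ} (ht : t ∈ Icc a b) : 0 ≤ bern a b N j t := by
  have hta : 0 ≤ t - a := sub_nonneg.2 ht.1
  have hbt : 0 ≤ b - t := sub_nonneg.2 ht.2
  have hba : 0 ≤ b - a := by linarith
  unfold bern
  positivity

theorem node_mem_Icc (hab : a ≤ b) {j : ℕ} (hj : j ≤ N) :
    a + j * (b - a) / N ∈ Icc a b := by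
  have h0 : 0 ≤ (j : ℝ) / N := by positivity
  have h1 : (j : ℝ) / N ≤ 1 := div_le_one_of_le₀ (by exact_mod_cast hj) N.cast_nonneg
  rw [mul_div_right_comm]
  constructor <;> nlinarith

end Bernstein

section Approximation

variable {a b : ℝ} {N : ℕ} {x : ℝ → ℝ}

theorem abs_bernApprox_sub_le {d M t : ℝ} (hab : a < b) (hN : N ≠ 0) (ht : t ∈ Icc a b)
    (hx : ∀ v ∈ Icc a b, |x v - x t - d * (v - t)| ≤ M / 2 * (v - t) ^ 2) :
    |bernApprox x a b N t - x t| ≤ M / 2 * ((t - a) * (b - t) / N) := by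
  have hsplit : bernApprox x a b N t - x t
      = ∑ j ∈ Finset.range (N + 1),
          (x (a + j * (b - a) / N) - x t - d * (a + j * (b - a) / N - t)) * bern a b N j t := by
    have hterm : ∀ j : ℕ,
        (x (a + j * (b - a) / N) - x t - d * (a + j * (b - a) / N - t)) * bern a b N j t
          = x (a + j * (b - a) / N) * bern a b N j t - x t * bern a b N j t
            - d * ((a + j * (b - a) / N - t) * bern a b N j t) := fun j => by ring
    simp only [hterm, Finset.sum_sub_distrib, ← Finset.mul_sum, sum_bern_eq_one hab,
      sum_node_sub_mul_bern hab hN]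
    simp [bernApprox]
  rw [hsplit, ← sum_node_sub_sq_mul_bern hab hN, Finset.mul_sum]
  refine (Finset.abs_sum_le_sum_abs _ _).trans (Finset.sum_le_sum fun j hj => ?_)
  rw [abs_mul, abs_of_nonneg (bern_nonneg ht), ← mul_assoc]
  exact mul_le_mul_of_nonneg_right
    (hx _ (node_mem_Icc hab.le (Nat.lt_succ_iff.1 (Finset.mem_range.1 hj)))) (bern_nonneg ht)

theorem abs_integral_bernApprox_sub_le {x' : ℝ → ℝ} {L : ℝ≥0} (hab : a < b) (hN : N ≠ 0)
    (hx : ∀ w ∈ Icc a b, HasDerivWithinAt x (x' w) (Icc a b) w)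
    (hlip : LipschitzOnWith L x' (Icc a b)) :
    |(∫ t in a..b, bernApprox x a b N t) - ∫ t in a..b, x t| ≤ L * (b - a) ^ 3 / (8 * N) := by
  have hint : IntervalIntegrable (bernApprox x a b N) volume a b :=
    (continuous_finsetSum _ fun j _ =>
      continuous_const.mul (by unfold bern; fun_prop)).intervalIntegrable a b
  have hxint : IntervalIntegrable x volume a b :=
    ContinuousOn.intervalIntegrable_of_Icc hab.le fun w hw => (hx w hw).continuousWithinAt
  rw [← integral_sub hint hxint, ← Real.norm_eq_abs]
  have hbound :
      ∀ t ∈ uIoc a b, ‖bernApprox x a b N t - x t‖ ≤ L * (b - a) ^ 2 / (8 * N) := by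
    intro t ht
    rw [uIoc_of_le hab.le] at ht
    have ht' : t ∈ Icc a b := Ioc_subset_Icc_self ht
    calc ‖bernApprox x a b N t - x t‖ ≤ L / 2 * ((t - a) * (b - t) / N) :=
          abs_bernApprox_sub_le hab hN ht' fun v hv =>
            abs_sub_sub_mul_le (convex_Icc a b) hx hlip ht' hv
      _ ≤ L / 2 * ((b - a) ^ 2 / 4 / N) := by
          gcongr
          nlinarith [sq_nonneg (2 * t - a - b)]
      _ = L * (b - a) ^ 2 / (8 * N) := by ring
  calc ‖∫ t in a..b, (bernApprox x a b N t - x t)‖ ≤ L * (b - a) ^ 2 / (8 * N) * |b - a| :=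
        norm_integral_le_of_norm_le_const hbound
    _ = L * (b - a) ^ 3 / (8 * N) := by rw [abs_of_pos (sub_pos.2 hab)]; ring

end Approximation

theorem ContDiffOn.lipschitzOnWith_derivWithin_Icc {a b : ℝ} {x : ℝ → ℝ} (hab : a < b)
    (hx : ContDiffOn ℝ 2 x (Icc a b)) :
    LipschitzOnWith (sSup ((fun τ => |iteratedDerivWithin 2 x (Icc a b) τ|) '' Icc a b)).toNNReal
      (derivWithin x (Icc a b)) (Icc a b) := by
  have hu := uniqueDiffOn_Icc hab
  have hbdd : BddAbove ((fun τ => |iteratedDerivWithin 2 x (Icc a b) τ|) '' Icc a b) :=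
    (isCompact_Icc.image_of_continuousOn
      (hx.continuousOn_iteratedDerivWithin le_rfl hu).abs).bddAbove
  refine (convex_Icc a b).lipschitzOnWith_of_nnnorm_hasDerivWithin_le
    (f' := iteratedDerivWithin 2 x (Icc a b)) (fun w hw => ?_) fun w hw => ?_
  · rw [iteratedDerivWithin_eq_iterate]
    exact ((hx.derivWithin hu (m := 1) le_rfl).differentiableOn one_ne_zero w hw).hasDerivWithinAt
  · rw [← NNReal.coe_le_coe, coe_nnnorm, Real.coe_toNNReal']
    exact le_max_of_le_left (le_csSup hbdd ⟨w, hw, rfl⟩)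

theorem abs_sum_integral_bernApprox_sub_le {x x' : ℝ → ℝ} {L : ℝ≥0} {T : ℕ → ℝ} {K N : ℕ}
    {h : ℝ} (hN : N ≠ 0) (hmono : ∀ k < K, T k < T (k + 1))
    (hsize : ∀ k < K, T (k + 1) - T k ≤ h)
    (hx : ∀ w ∈ Icc (T 0) (T K), HasDerivWithinAt x (x' w) (Icc (T 0) (T K)) w)
    (hlip : LipschitzOnWith L x' (Icc (T 0) (T K))) :
    |(∑ k ∈ Finset.range K, ∫ t in (T k)..(T (k + 1)), bernApprox x (T k) (T (k + 1)) N t)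
        - ∫ t in (T 0)..(T K), x t| ≤ K * (L * h ^ 3 / (8 * N)) := by
  have hT : MonotoneOn T (Iic K) := monotoneOn_Iic_of_le_succ fun k hk => (hmono k hk).le
  have hsub : ∀ k < K, Icc (T k) (T (k + 1)) ⊆ Icc (T 0) (T K) := fun k hk =>
    Icc_subset_Icc (hT (Nat.zero_le K) hk.le (Nat.zero_le k)) (hT hk (mem_Iic.2 le_rfl) hk)
  have hxint : ∀ k < K, IntervalIntegrable x volume (T k) (T (k + 1)) := fun k hk =>
    ContinuousOn.intervalIntegrable_of_Icc (hmono k hk).le fun w hw =>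
      ((hx w (hsub k hk hw)).mono (hsub k hk)).continuousWithinAt
  rw [← sum_integral_adjacent_intervals hxint, ← Finset.sum_sub_distrib]
  refine ((Finset.abs_sum_le_sum_abs _ _).trans
    (Finset.sum_le_card_nsmul _ _ _ fun k hk => ?_)).trans_eq
      (by rw [Finset.card_range, nsmul_eq_mul])
  have hk := Finset.mem_range.1 hk
  calc _ ≤ L * (T (k + 1) - T k) ^ 3 / (8 * N) :=
        abs_integral_bernApprox_sub_le (hmono k hk) hN
          (fun w hw => (hx w (hsub k hk hw)).mono (hsub k hk)) (hlip.mono (hsub k hk))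
    _ ≤ L * h ^ 3 / (8 * N) := by
        have := (sub_pos.2 (hmono k hk)).le
        gcongr
        exact hsize k hk

theorem composite_bernstein_integral_bound_general
    (tf Ct : ℝ) (htf : 0 < tf)
    (K N : ℕ) (hK : 1 ≤ K) (hN : 1 ≤ N)
    (T : ℕ → ℝ) (hT0 : T 0 = 0) (hTK : T K = tf)
    (hmono : ∀ k < K, T k < T (k + 1))
    (hsize : ∀ k < K, T (k + 1) - T k ≤ Ct / (K : ℝ))
    (x : ℝ → ℝ) (hx : ContDiffOn ℝ 2 x (Set.Icc 0 tf)) :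
    |(∑ k ∈ Finset.range K, ∫ t in (T k)..(T (k + 1)), bernApprox x (T k) (T (k + 1)) N t)
        - ∫ t in (0 : ℝ)..tf, x t|
      ≤ (Ct ^ 3 / 8 *
          sSup ((fun τ => |iteratedDerivWithin 2 x (Set.Icc 0 tf) τ|) '' Set.Icc 0 tf))
        / ((K : ℝ) ^ 2 * (N : ℝ)) := by
  set M := sSup ((fun τ => |iteratedDerivWithin 2 x (Icc 0 tf) τ|) '' Icc 0 tf)
  have hM : (M.toNNReal : ℝ) = M :=
    Real.coe_toNNReal _ (Real.sSup_nonneg (forall_mem_image.2 fun τ _ => abs_nonneg _))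
  have hd : ∀ w ∈ Icc 0 tf, HasDerivWithinAt x (derivWithin x (Icc 0 tf) w) (Icc 0 tf) w :=
    fun w hw => (hx.differentiableOn two_ne_zero w hw).hasDerivWithinAt
  have hbound := abs_sum_integral_bernApprox_sub_le (Nat.one_le_iff_ne_zero.1 hN) hmono hsize
    (hT0 ▸ hTK ▸ hd) (hT0 ▸ hTK ▸ hx.lipschitzOnWith_derivWithin_Icc htf)
  rw [hT0, hTK, hM] at hbound
  have hK0 : (K : ℝ) ≠ 0 := Nat.cast_ne_zero.2 (Nat.one_le_iff_ne_zero.1 hK)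
  convert hbound using 1
  field_simp

/-- Lemma 3: for `x ∈ C²([0,t_f])`, knots `0 = T 0 < … < T K = t_f`
with `T (k+1) − T k ≤ C_t/K`, the integral of the composite Bernstein approximant
(i.e. the sum over the segments of the integrals of the pieces) satisfies
`|∫₀^{t_f} x_M − ∫₀^{t_f} x| ≤ C/(K²N)` with
`C = (C_t³/8) sup_{τ∈[0,t_f]} |x''(τ)|`. -/
theorem composite_bernstein_integral_bound
    (tf Ct : ℝ) (htf : 0 < tf) (hCt : 0 < Ct)
    (K N : ℕ) (hK : 1 ≤ K) (hN : 1 ≤ N)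
    (T : ℕ → ℝ) (hT0 : T 0 = 0) (hTK : T K = tf)
    (hmono : ∀ k < K, T k < T (k + 1))
    (hsize : ∀ k < K, T (k + 1) - T k ≤ Ct / (K : ℝ))
    (x : ℝ → ℝ) (hx : ContDiffOn ℝ 2 x (Set.Icc 0 tf)) :
    |(∑ k ∈ Finset.range K, ∫ t in (T k)..(T (k + 1)), bernApprox x (T k) (T (k + 1)) N t)
        - ∫ t in (0 : ℝ)..tf, x t|
      ≤ (Ct ^ 3 / 8 *
          sSup ((fun τ => |iteratedDerivWithin 2 x (Set.Icc 0 tf) τ|) '' Set.Icc 0 tf))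
        / ((K : ℝ) ^ 2 * (N : ℝ)) :=
  composite_bernstein_integral_bound_general tf Ct htf K N hK hN T hT0 hTK hmono hsize x hx
end

section
/- Let a < b be real numbers, N ≥ 1 an integer, h = (b−a)/N, and x : [a,b] → ℝ a function. Let B_N x be the Bernstein approximant of x of degree N on [a,b]. Then for every τ ∈ [a,b] with τ ≠ a + jh for all j = 0,...,N, the generalized Stancu remainder formula holds: B_N x(τ) − x(τ) = ((τ−a)(b−τ)/N)·Σ_{j=0}^{N−1} [a+jh, a+(j+1)h, τ; x]·b_{j,N−1}(τ), where [s, t, τ; x] denotes the second-order divided difference ( (x(τ)−x(t))/(τ−t) − (x(t)−x(s))/(t−s) ) / (τ−s). -/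
/-- Second-order divided difference of `x` at the points `s, t, u`:
`[s,t,u;x] = ((x(u)−x(t))/(u−t) − (x(t)−x(s))/(t−s)) / (u−s)`. -/
noncomputable def divDiff2 (x : ℝ → ℝ) (s t u : ℝ) : ℝ :=
  ((x u - x t) / (u - t) - (x t - x s) / (t - s)) / (u - s)

open Finset

section Bernstein

variable {a b : ℝ} (t : ℝ)

theorem sum_bern (hab : a ≠ b) (N : ℕ) : ∑ j ∈ range (N + 1), bern a b N j t = 1 := by
  have hba : (b - a) ^ N ≠ 0 := pow_ne_zero _ (sub_ne_zero.mpr hab.symm)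
  simp only [bern]
  rw [← sum_div, div_eq_one_iff_eq hba, show b - a = (t - a) + (b - t) by ring, add_pow]
  exact sum_congr rfl fun j _ => by ring

theorem sub_left_mul_bern (hab : a ≠ b) (N j : ℕ) :
    (t - a) * bern a b N j t = (j + 1) / (N + 1) * (b - a) * bern a b (N + 1) (j + 1) t := by
  have hba : b - a ≠ 0 := sub_ne_zero.mpr hab.symm
  have hchoose : ((N + 1 : ℕ) : ℝ) * N.choose j = (N + 1).choose (j + 1) * ((j : ℝ) + 1) := by
    exact_mod_cast Nat.add_one_mul_choose_eq N j
  push_cast at hchoose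
  simp only [bern, Nat.add_sub_add_right, pow_succ]
  field_simp
  linear_combination (t - a) * (t - a) ^ j * (b - t) ^ (N - j) * hchoose

theorem sub_right_mul_bern (hab : a ≠ b) {N j : ℕ} (hj : j ≤ N) :
    (b - t) * bern a b N j t = (N + 1 - j) / (N + 1) * (b - a) * bern a b (N + 1) j t := by
  have hba : b - a ≠ 0 := sub_ne_zero.mpr hab.symm
  have hchoose := congrArg (Nat.cast (R := ℝ)) (Nat.choose_mul_succ_eq N j)
  push_cast [Nat.cast_sub (show j ≤ N + 1 by omega)] at hchoose
  simp only [bern, Nat.sub_add_comm hj, pow_succ]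
  field_simp
  linear_combination (t - a) ^ j * (b - t) ^ (N - j) * (b - t) * hchoose

theorem bern_summation_by_parts (hab : a ≠ b) (M : ℕ) (c : ℕ → ℝ) :
    (t - a) * (b - t) / (b - a) * ∑ j ∈ range (M + 1), (c (j + 1) - c j) * bern a b M j t
      = ∑ j ∈ range (M + 2), (a + j * ((b - a) / (M + 1)) - t) * c j * bern a b (M + 1) j t := by
  have hba : b - a ≠ 0 := sub_ne_zero.mpr hab.symm
  set u : ℕ → ℝ := fun j => c j * (b - t) * (j / (M + 1) * bern a b (M + 1) j t)
  set v : ℕ → ℝ := fun j => c j * (t - a) * ((M + 1 - j) / (M + 1) * bern a b (M + 1) j t)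
  have hterm : ∀ j ∈ range (M + 1),
      (t - a) * (b - t) / (b - a) * ((c (j + 1) - c j) * bern a b M j t) = u (j + 1) - v j := by
    intro j hj
    calc _ = c (j + 1) * (b - t) / (b - a) * ((t - a) * bern a b M j t)
          - c j * (t - a) / (b - a) * ((b - t) * bern a b M j t) := by ring
      _ = u (j + 1) - v j := by
        rw [sub_left_mul_bern t hab, sub_right_mul_bern t hab (mem_range_succ_iff.mp hj)]
        simp only [u, v, Nat.cast_add_one]
        field_simp
  have hsum_u : ∑ j ∈ range (M + 1), u (j + 1) = ∑ j ∈ range (M + 2), u j := by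
    rw [sum_range_succ' u (M + 1)]
    simp [u]
  have hsum_v : ∑ j ∈ range (M + 1), v j = ∑ j ∈ range (M + 2), v j := by
    rw [sum_range_succ v (M + 1)]
    simp [v]
  rw [mul_sum, sum_congr rfl hterm, sum_sub_distrib, hsum_u, hsum_v, ← sum_sub_distrib]
  refine sum_congr rfl fun j _ => ?_
  simp only [u, v]
  field_simp
  ring

theorem bernApprox_sub_eq_sum (hab : a ≠ b) (x : ℝ → ℝ) (N : ℕ) :
    bernApprox x a b N t - x t
      = ∑ j ∈ range (N + 1), (x (a + j * (b - a) / N) - x t) * bern a b N j t := by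
  simp only [bernApprox, sub_mul, sum_sub_distrib, ← mul_sum, sum_bern t hab, mul_one]

end Bernstein

theorem divDiff2_eq_slope_sub_slope (x : ℝ → ℝ) {s t u : ℝ} (hsu : s ≠ u) (htu : t ≠ u)
    (hst : s ≠ t) : divDiff2 x s t u = (slope x u t - slope x u s) / (t - s) := by
  have := sub_ne_zero.mpr hsu
  have := sub_ne_zero.mpr htu
  have := sub_ne_zero.mpr hst
  simp only [divDiff2, slope_def_field]
  field_simp
  ring

theorem stancu_remainder_general (a b : ℝ) (hab : a < b) (N : ℕ) (hN : 1 ≤ N) (x : ℝ → ℝ)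
    (τ : ℝ)
    (hnode : ∀ j : ℕ, j ≤ N → τ ≠ a + (j : ℝ) * ((b - a) / (N : ℝ))) :
    bernApprox x a b N τ - x τ
      = (τ - a) * (b - τ) / (N : ℝ) *
          ∑ j ∈ Finset.range N,
            divDiff2 x (a + (j : ℝ) * ((b - a) / (N : ℝ)))
              (a + ((j : ℝ) + 1) * ((b - a) / (N : ℝ))) τ * bern a b (N - 1) j τ := by
  obtain ⟨M, rfl⟩ : ∃ M, N = M + 1 := ⟨N - 1, by omega⟩
  push_cast at hnode ⊢
  have hba : b - a ≠ 0 := sub_ne_zero.mpr hab.ne'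
  set h := (b - a) / ((M : ℝ) + 1) with h_def
  have hh : h ≠ 0 := div_ne_zero hba (by positivity)
  set g : ℕ → ℝ := fun j => slope x τ (a + j * h)
  have hlhs : bernApprox x a b (M + 1) τ - x τ
      = ∑ j ∈ range (M + 2), (a + j * h - τ) * g j * bern a b (M + 1) j τ := by
    rw [bernApprox_sub_eq_sum τ hab.ne]
    refine sum_congr rfl fun j _ => ?_
    rw [← smul_eq_mul _ (g j), sub_smul_slope, vsub_eq_sub, mul_div_assoc]
    push_cast
    rfl
  have hrhs : ∀ j ∈ range (M + 1), divDiff2 x (a + j * h) (a + (j + 1) * h) τ * bern a b M j τ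
      = (g (j + 1) - g j) * bern a b M j τ / h := by
    intro j hj
    have hj := mem_range_succ_iff.mp hj
    rw [divDiff2_eq_slope_sub_slope x (hnode j (by omega)).symm
      (by exact_mod_cast (hnode (j + 1) (by omega)).symm) (by simpa using hh)]
    simp only [g, Nat.cast_add_one]
    ring_nf
  rw [hlhs, sum_congr rfl hrhs, ← sum_div, ← bern_summation_by_parts τ hab.ne, h_def]
  field_simp

/-- the generalized Stancu remainder formula: for `τ ∈ [a,b]` not a node,
`B_N x(τ) − x(τ) = ((τ−a)(b−τ)/N) Σ_{j=0}^{N−1} [a+jh, a+(j+1)h, τ; x] b_{j,N−1}(τ)`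
with `h = (b−a)/N`. -/
theorem stancu_remainder (a b : ℝ) (hab : a < b) (N : ℕ) (hN : 1 ≤ N) (x : ℝ → ℝ)
    (τ : ℝ) (hτ : τ ∈ Set.Icc a b)
    (hnode : ∀ j : ℕ, j ≤ N → τ ≠ a + (j : ℝ) * ((b - a) / (N : ℝ))) :
    bernApprox x a b N τ - x τ
      = (τ - a) * (b - τ) / (N : ℝ) *
          ∑ j ∈ Finset.range N,
            divDiff2 x (a + (j : ℝ) * ((b - a) / (N : ℝ)))
              (a + ((j : ℝ) + 1) * ((b - a) / (N : ℝ))) τ * bern a b (N - 1) j τ :=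
  stancu_remainder_general a b hab N hN x τ hnode
end

section
/- Let x : [0,t_f] → ℝ be twice continuously differentiable, let K, N ≥ 1, and let 0 = t_0 < t_1 < ... < t_K = t_f be knots satisfying t_k − t_{k−1} ≤ C_t/K for all k, where C_t > 0. Then the composite Bernstein quadrature satisfies | Σ_{k=1}^K ((t_k − t_{k−1})/(N+1))·Σ_{j=0}^N x(t_{k,j}) − ∫₀^{t_f} x(t) dt | ≤ (C_t³/(8K²N))·sup_{τ∈[0,t_f]}|x''(τ)|, where t_{k,j} = t_{k−1} + (j/N)(t_k − t_{k−1}). -/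
/-!
On each subinterval the rule is the exact integral of the Bernstein approximant `B_N x`, since
every Bernstein basis polynomial `b_{N,j}` has integral `1 / (N + 1)` over `[0, 1]`. The weights
`b_{N,j}(τ)` are nonnegative and sum to `1`, and under them the nodes `j / N` have mean `τ` and
variance `τ (1 - τ) / N ≤ 1 / (4N)`. Hence the Taylor estimate
`|x r - x t - x' t (r - t)| ≤ M (r - t)² / 2`, with `M = sup |x''|`, gives
`|B_N x - x| ≤ M h² / (8N)` on an interval of length `h`. Integrating, each subinterval
contributes at most `M h³ / (8N) ≤ M C_t³ / (8K³N)`, and there are `K` of them.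
-/

open Set Finset intervalIntegral

namespace bernsteinPolynomial

lemma eval_nonneg {n ν : ℕ} {τ : ℝ} (hτ : τ ∈ Icc (0 : ℝ) 1) :
    0 ≤ (bernsteinPolynomial ℝ n ν).eval τ := by
  have : 0 ≤ 1 - τ := sub_nonneg.2 hτ.2
  simp only [bernsteinPolynomial, Polynomial.eval_mul, Polynomial.eval_natCast,
    Polynomial.eval_pow, Polynomial.eval_X, Polynomial.eval_sub, Polynomial.eval_one]
  exact mul_nonneg (mul_nonneg (Nat.cast_nonneg _) (pow_nonneg hτ.1 _)) (pow_nonneg this _)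

section Moments

variable (n : ℕ) (τ : ℝ)

lemma sum_eval : ∑ ν ∈ range (n + 1), (bernsteinPolynomial ℝ n ν).eval τ = 1 := by
  simpa [Polynomial.eval_finsetSum] using congrArg (Polynomial.eval τ) (sum ℝ n)

lemma sum_mul_eval : ∑ ν ∈ range (n + 1), ν * (bernsteinPolynomial ℝ n ν).eval τ = n * τ := by
  simpa [Polynomial.eval_finsetSum] using congrArg (Polynomial.eval τ) (sum_smul ℝ n)

lemma sum_sq_mul_eval :
    ∑ ν ∈ range (n + 1), (n * τ - ν) ^ 2 * (bernsteinPolynomial ℝ n ν).eval τ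
      = n * τ * (1 - τ) := by
  simpa [Polynomial.eval_finsetSum] using congrArg (Polynomial.eval τ) (variance ℝ n)

end Moments

/-- `b_{n+1,ν+1}' = (n + 1) (b_{n,ν} - b_{n,ν+1})`, and `b_{n+1,ν+1}` vanishes at `0` and `1`. -/
lemma integral_eval_succ {n ν : ℕ} (h : ν < n) :
    ∫ t in (0 : ℝ)..1, (bernsteinPolynomial ℝ n (ν + 1)).eval t
      = ∫ t in (0 : ℝ)..1, (bernsteinPolynomial ℝ n ν).eval t := by
  set p := bernsteinPolynomial ℝ (n + 1) (ν + 1)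
  have hp : ∫ t in (0 : ℝ)..1, (Polynomial.derivative p).eval t = 0 := by
    rw [integral_eq_sub_of_hasDerivAt (fun t _ => p.hasDerivAt t)
      (p.derivative.continuous.intervalIntegrable _ _), eval_at_0, eval_at_1]
    simp [h.ne]
  rw [derivative_succ] at hp
  simp only [Polynomial.eval_mul, Polynomial.eval_natCast, Polynomial.eval_sub,
    add_tsub_cancel_right, integral_const_mul] at hp
  rw [integral_sub ((Polynomial.continuous _).intervalIntegrable _ _)
    ((Polynomial.continuous _).intervalIntegrable _ _)] at hp
  have : ((n + 1 : ℕ) : ℝ) ≠ 0 := by positivity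
  linarith [(mul_eq_zero.1 hp).resolve_left this]

theorem integral_eval {n ν : ℕ} (h : ν ≤ n) :
    ∫ t in (0 : ℝ)..1, (bernsteinPolynomial ℝ n ν).eval t = 1 / (n + 1) := by
  have hconst : ∀ μ ≤ n, ∫ t in (0 : ℝ)..1, (bernsteinPolynomial ℝ n μ).eval t
      = ∫ t in (0 : ℝ)..1, (bernsteinPolynomial ℝ n 0).eval t := by
    intro μ hμ
    induction μ with
    | zero => rfl
    | succ μ ih => rw [integral_eval_succ hμ, ih (by omega)]
  have hsum : ∑ μ ∈ range (n + 1), ∫ t in (0 : ℝ)..1, (bernsteinPolynomial ℝ n μ).eval t = 1 := by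
    rw [← integral_finsetSum fun _ _ => (Polynomial.continuous _).intervalIntegrable _ _]
    simp [sum_eval]
  rw [sum_congr rfl fun μ hμ => hconst μ (by simpa [Nat.lt_succ_iff] using hμ)] at hsum
  rw [hconst ν h, eq_div_iff (by positivity)]
  simpa [mul_comm] using hsum

end bernsteinPolynomial

lemma ConvexOn.add_mul_sub_le_of_hasDerivWithinAt {S : Set ℝ} {φ : ℝ → ℝ} {φ' t r : ℝ}
    (hφ : ConvexOn ℝ S φ) (ht : t ∈ S) (hr : r ∈ S) (hd : HasDerivWithinAt φ φ' S t) :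
    φ t + φ' * (r - t) ≤ φ r := by
  rcases lt_trichotomy t r with htr | rfl | hrt
  · have := hφ.le_slope_of_hasDerivWithinAt ht hr htr hd
    rw [slope_def_field, le_div_iff₀ (sub_pos.2 htr)] at this
    linarith
  · simp
  · have := hφ.slope_le_of_hasDerivWithinAt hr ht hrt hd
    rw [slope_def_field, div_le_iff₀ (sub_pos.2 hrt)] at this
    linarith

section Taylor

variable {S : Set ℝ} {f f' f'' : ℝ → ℝ} {M t r : ℝ}

/-- `s ↦ M / 2 * s ^ 2 - f s` is convex, hence lies above its tangent line at `t`. -/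
lemma sub_sub_mul_le_of_deriv2_le (hS : Convex ℝ S)
    (hf : ∀ u ∈ S, HasDerivWithinAt f (f' u) S u) (hf' : ∀ u ∈ S, HasDerivWithinAt f' (f'' u) S u)
    (hM : ∀ u ∈ S, f'' u ≤ M) (ht : t ∈ S) (hr : r ∈ S) :
    f r - f t - f' t * (r - t) ≤ M / 2 * (r - t) ^ 2 := by
  have hφ : ∀ u ∈ S, HasDerivWithinAt (fun s => M / 2 * s ^ 2 - f s) (M * u - f' u) S u := by
    intro u hu
    refine (((hasDerivWithinAt_id u S).pow 2).const_mul (M / 2) |>.sub (hf u hu)).congr_deriv ?_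
    simp only [id, Nat.cast_ofNat]
    ring
  have hφ' : ∀ u ∈ S, HasDerivWithinAt (fun s => M * s - f' s) (M - f'' u) S u := by
    intro u hu
    exact ((hasDerivWithinAt_id u S).const_mul M |>.sub (hf' u hu)).congr_deriv (by simp)
  have hconvex : ConvexOn ℝ S fun s => M / 2 * s ^ 2 - f s :=
    convexOn_of_hasDerivWithinAt2_nonneg hS
      (fun u hu => (hφ u hu).continuousWithinAt)
      (fun u hu => (hφ u (interior_subset hu)).mono interior_subset)
      (fun u hu => (hφ' u (interior_subset hu)).mono interior_subset)
      (fun u hu => sub_nonneg.2 (hM u (interior_subset hu)))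
  have := hconvex.add_mul_sub_le_of_hasDerivWithinAt ht hr (hφ t ht)
  linarith

lemma abs_sub_sub_mul_le_of_abs_deriv2_le (hS : Convex ℝ S)
    (hf : ∀ u ∈ S, HasDerivWithinAt f (f' u) S u) (hf' : ∀ u ∈ S, HasDerivWithinAt f' (f'' u) S u)
    (hM : ∀ u ∈ S, |f'' u| ≤ M) (ht : t ∈ S) (hr : r ∈ S) :
    |f r - f t - f' t * (r - t)| ≤ M / 2 * (r - t) ^ 2 := by
  have hupper := sub_sub_mul_le_of_deriv2_le hS hf hf' (fun u hu => (abs_le.1 (hM u hu)).2) ht hr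
  have hlower := sub_sub_mul_le_of_deriv2_le (f := -f) (f' := -f') (f'' := -f'') hS
    (fun u hu => (hf u hu).neg) (fun u hu => (hf' u hu).neg)
    (fun u hu => neg_le.1 (abs_le.1 (hM u hu)).1) ht hr
  simp only [Pi.neg_apply] at hlower
  exact abs_le.2 ⟨by linarith, hupper⟩

lemma ContDiffOn.abs_sub_sub_derivWithin_mul_le {a b : ℝ} (hab : a < b)
    (hf : ContDiffOn ℝ 2 f (Icc a b))
    (hM : ∀ u ∈ Icc a b, |iteratedDerivWithin 2 f (Icc a b) u| ≤ M)
    (ht : t ∈ Icc a b) (hr : r ∈ Icc a b) :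
    |f r - f t - derivWithin f (Icc a b) t * (r - t)| ≤ M / 2 * (r - t) ^ 2 := by
  have hS : UniqueDiffOn ℝ (Icc a b) := uniqueDiffOn_Icc hab
  refine abs_sub_sub_mul_le_of_abs_deriv2_le (convex_Icc a b)
    (fun u hu => (hf.differentiableOn two_ne_zero u hu).hasDerivWithinAt) (fun u hu => ?_) hM ht hr
  rw [iteratedDerivWithin_succ, iteratedDerivWithin_one]
  exact ((hf.derivWithin hS (m := 1) le_rfl).differentiableOn one_ne_zero u hu).hasDerivWithinAt

end Taylor

lemma abs_sum_mul_sub_le_sum_mul {ι : Type*} {s : Finset ι} {w r e : ι → ℝ} {f : ℝ → ℝ}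
    {t c : ℝ} (hw : ∀ i ∈ s, 0 ≤ w i) (hw_sum : ∑ i ∈ s, w i = 1)
    (hw_mean : ∑ i ∈ s, w i * r i = t) (he : ∀ i ∈ s, |f (r i) - f t - c * (r i - t)| ≤ e i) :
    |∑ i ∈ s, w i * f (r i) - f t| ≤ ∑ i ∈ s, w i * e i := by
  have hrem : ∑ i ∈ s, w i * f (r i) - f t
      = ∑ i ∈ s, w i * (f (r i) - f t - c * (r i - t)) := by
    simp only [mul_sub, sum_sub_distrib, ← sum_mul, hw_sum, mul_left_comm _ c, ← mul_sum,
      hw_mean]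
    ring
  rw [hrem]
  refine (abs_sum_le_sum_abs _ _).trans (sum_le_sum fun i hi => ?_)
  rw [abs_mul, abs_of_nonneg (hw i hi)]
  exact mul_le_mul_of_nonneg_left (he i hi) (hw i hi)

noncomputable def bernsteinQuadrature (a b : ℝ) (N : ℕ) (f : ℝ → ℝ) : ℝ :=
  (b - a) / ((N : ℝ) + 1) * ∑ j ∈ range (N + 1), f (a + j * (b - a) / N)

lemma bernsteinQuadrature_eq_mul_zero_one (a b : ℝ) (N : ℕ) (f : ℝ → ℝ) :
    bernsteinQuadrature a b N f
      = (b - a) * bernsteinQuadrature 0 1 N fun σ => f (a + (b - a) * σ) := by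
  simp only [bernsteinQuadrature, sub_zero, mul_one, zero_add]
  rw [← mul_assoc, ← mul_div_assoc, mul_one]
  exact congrArg _ (sum_congr rfl fun j _ => congrArg f (by ring))

lemma div_natCast_mem_Icc {j N : ℕ} (hj : j ≤ N) : (j / N : ℝ) ∈ Icc (0 : ℝ) 1 :=
  ⟨by positivity, div_le_one_of_le₀ (by exact_mod_cast hj) (Nat.cast_nonneg N)⟩

section Quadrature

variable {f f' : ℝ → ℝ} {M : ℝ} {N : ℕ}

lemma abs_sum_bernsteinPolynomial_eval_mul_sub_le (hN : N ≠ 0) (hM : 0 ≤ M)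
    (htaylor : ∀ t ∈ Icc (0 : ℝ) 1, ∀ r ∈ Icc (0 : ℝ) 1,
      |f r - f t - f' t * (r - t)| ≤ M / 2 * (r - t) ^ 2)
    {τ : ℝ} (hτ : τ ∈ Icc (0 : ℝ) 1) :
    |∑ j ∈ range (N + 1), (bernsteinPolynomial ℝ N j).eval τ * f (j / N) - f τ|
      ≤ M / (8 * N) := by
  have hN' : (N : ℝ) ≠ 0 := Nat.cast_ne_zero.2 hN
  have hmem : ∀ j ∈ range (N + 1), (j / N : ℝ) ∈ Icc (0 : ℝ) 1 :=
    fun j hj => div_natCast_mem_Icc (Nat.lt_succ_iff.1 (mem_range.1 hj))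
  have hmean : ∑ j ∈ range (N + 1), (bernsteinPolynomial ℝ N j).eval τ * (j / N) = τ := by
    have : ∑ j ∈ range (N + 1), (bernsteinPolynomial ℝ N j).eval τ * (j / N)
        = (∑ j ∈ range (N + 1), j * (bernsteinPolynomial ℝ N j).eval τ) / N := by
      rw [sum_div]
      exact sum_congr rfl fun j _ => by ring
    rw [this, bernsteinPolynomial.sum_mul_eval]
    field_simp
  calc _ ≤ ∑ j ∈ range (N + 1), (bernsteinPolynomial ℝ N j).eval τ * (M / 2 * (j / N - τ) ^ 2) :=
        abs_sum_mul_sub_le_sum_mul (fun j _ => bernsteinPolynomial.eval_nonneg hτ)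
          (bernsteinPolynomial.sum_eval N τ) hmean (fun j hj => htaylor τ hτ _ (hmem j hj))
    _ = M / 2 / N ^ 2 *
          ∑ j ∈ range (N + 1), (N * τ - j) ^ 2 * (bernsteinPolynomial ℝ N j).eval τ := by
        rw [mul_sum]
        refine sum_congr rfl fun j _ => ?_
        field_simp
        ring
    _ = M / 2 * (τ * (1 - τ)) / N := by
        rw [bernsteinPolynomial.sum_sq_mul_eval]
        field_simp
    _ ≤ M / 2 * (1 / 4) / N := by
        gcongr
        nlinarith [sq_nonneg (τ - 1 / 2)]
    _ = M / (8 * N) := by ring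

lemma abs_bernsteinQuadrature_zero_one_sub_integral_le (hN : N ≠ 0)
    (hf : ContinuousOn f (Icc 0 1))
    (htaylor : ∀ t ∈ Icc (0 : ℝ) 1, ∀ r ∈ Icc (0 : ℝ) 1,
      |f r - f t - f' t * (r - t)| ≤ M / 2 * (r - t) ^ 2) :
    |bernsteinQuadrature 0 1 N f - ∫ t in (0 : ℝ)..1, f t| ≤ M / (8 * N) := by
  have hM : 0 ≤ M := by
    have := (abs_nonneg _).trans
      (htaylor 0 (left_mem_Icc.2 zero_le_one) 1 (right_mem_Icc.2 zero_le_one))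
    linarith
  set B : ℝ → ℝ := fun τ => ∑ j ∈ range (N + 1), (bernsteinPolynomial ℝ N j).eval τ * f (j / N)
  have hB : ContinuousOn B (Icc 0 1) := by fun_prop
  have hB_integral : ∫ τ in (0 : ℝ)..1, B τ = bernsteinQuadrature 0 1 N f := by
    rw [integral_finsetSum fun j _ => (by fun_prop : Continuous _).intervalIntegrable _ _,
      bernsteinQuadrature, mul_sum]
    refine sum_congr rfl fun j hj => ?_
    rw [integral_mul_const, bernsteinPolynomial.integral_eval (Nat.lt_succ_iff.1 (mem_range.1 hj))]
    simp
  rw [← hB_integral, ← integral_sub (hB.intervalIntegrable_of_Icc zero_le_one)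
    (hf.intervalIntegrable_of_Icc zero_le_one)]
  have hpointwise : ∀ τ ∈ uIoc (0 : ℝ) 1, ‖B τ - f τ‖ ≤ M / (8 * N) := fun τ hτ =>
    abs_sum_bernsteinPolynomial_eval_mul_sub_le hN hM htaylor
      (Ioc_subset_Icc_self (by rwa [uIoc_of_le zero_le_one] at hτ))
  simpa using norm_integral_le_of_norm_le_const hpointwise

lemma abs_bernsteinQuadrature_sub_integral_le {a b : ℝ} (hab : a ≤ b) (hN : N ≠ 0)
    (hf : ContinuousOn f (Icc a b))
    (htaylor : ∀ t ∈ Icc a b, ∀ r ∈ Icc a b, |f r - f t - f' t * (r - t)| ≤ M / 2 * (r - t) ^ 2) :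
    |bernsteinQuadrature a b N f - ∫ t in a..b, f t| ≤ M * (b - a) ^ 3 / (8 * N) := by
  set g : ℝ → ℝ := fun σ => f (a + (b - a) * σ)
  have hmaps : MapsTo (fun σ => a + (b - a) * σ) (Icc 0 1) (Icc a b) := fun σ hσ =>
    ⟨by nlinarith [hσ.1], by nlinarith [hσ.2]⟩
  have hg : ContinuousOn g (Icc 0 1) := hf.comp (by fun_prop) hmaps
  have hg_taylor : ∀ t ∈ Icc (0 : ℝ) 1, ∀ r ∈ Icc (0 : ℝ) 1,
      |g r - g t - (b - a) * f' (a + (b - a) * t) * (r - t)|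
        ≤ M * (b - a) ^ 2 / 2 * (r - t) ^ 2 := by
    intro t ht r hr
    calc |g r - g t - (b - a) * f' (a + (b - a) * t) * (r - t)|
        = |f (a + (b - a) * r) - f (a + (b - a) * t)
            - f' (a + (b - a) * t) * ((a + (b - a) * r) - (a + (b - a) * t))| := by
          congr 1; ring
      _ ≤ M / 2 * ((a + (b - a) * r) - (a + (b - a) * t)) ^ 2 := htaylor _ (hmaps ht) _ (hmaps hr)
      _ = M * (b - a) ^ 2 / 2 * (r - t) ^ 2 := by ring
  have hintegral : ∫ t in a..b, f t = (b - a) * ∫ σ in (0 : ℝ)..1, g σ := by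
    have := smul_integral_comp_add_mul f (b - a) a (a := 0) (b := 1)
    simp only [mul_zero, add_zero, mul_one, add_sub_cancel, smul_eq_mul] at this
    exact this.symm
  rw [bernsteinQuadrature_eq_mul_zero_one, hintegral, ← mul_sub, abs_mul,
    abs_of_nonneg (sub_nonneg.2 hab)]
  calc (b - a) * |bernsteinQuadrature 0 1 N g - ∫ σ in (0 : ℝ)..1, g σ|
      ≤ (b - a) * (M * (b - a) ^ 2 / (8 * N)) := by
        gcongr
        exact abs_bernsteinQuadrature_zero_one_sub_integral_le hN hg hg_taylor
    _ = M * (b - a) ^ 3 / (8 * N) := by ring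

lemma abs_sum_bernsteinQuadrature_sub_integral_le {K : ℕ} {T : ℕ → ℝ} (hN : N ≠ 0)
    (hT : ∀ k < K, T k ≤ T (k + 1)) (hf : ContinuousOn f (Icc (T 0) (T K)))
    (htaylor : ∀ t ∈ Icc (T 0) (T K), ∀ r ∈ Icc (T 0) (T K),
      |f r - f t - f' t * (r - t)| ≤ M / 2 * (r - t) ^ 2) :
    |∑ k ∈ range K, bernsteinQuadrature (T k) (T (k + 1)) N f - ∫ t in T 0..T K, f t|
      ≤ ∑ k ∈ range K, M * (T (k + 1) - T k) ^ 3 / (8 * N) := by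
  have hmono : MonotoneOn T (Set.Iic K) :=
    monotoneOn_of_le_add_one Set.ordConnected_Iic fun k _ _ hk => hT k (Nat.lt_of_succ_le hk)
  have hsub : ∀ k < K, Icc (T k) (T (k + 1)) ⊆ Icc (T 0) (T K) := fun k hk =>
    Icc_subset_Icc (hmono (Nat.zero_le _) hk.le (Nat.zero_le _))
      (hmono (Set.mem_Iic.2 hk) Set.self_mem_Iic hk)
  have hint : ∀ k < K, IntervalIntegrable f MeasureTheory.volume (T k) (T (k + 1)) := fun k hk =>
    (hf.mono (hsub k hk)).intervalIntegrable_of_Icc (hT k hk)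
  rw [← sum_integral_adjacent_intervals hint, ← sum_sub_distrib]
  refine (abs_sum_le_sum_abs _ _).trans (sum_le_sum fun k hk => ?_)
  have hk := mem_range.1 hk
  exact abs_bernsteinQuadrature_sub_integral_le (hT k hk) hN (hf.mono (hsub k hk))
    fun t ht r hr => htaylor t (hsub k hk ht) r (hsub k hk hr)

end Quadrature

theorem composite_bernstein_quadrature_bound_general
    (tf Ct : ℝ) (htf : 0 < tf)
    (K N : ℕ) (hN : 1 ≤ N)
    (T : ℕ → ℝ) (hT0 : T 0 = 0) (hTK : T K = tf)
    (hmono : ∀ k < K, T k < T (k + 1))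
    (hsize : ∀ k < K, T (k + 1) - T k ≤ Ct / (K : ℝ))
    (x : ℝ → ℝ) (hx : ContDiffOn ℝ 2 x (Set.Icc 0 tf)) :
    |(∑ k ∈ Finset.range K, (T (k + 1) - T k) / ((N : ℝ) + 1) *
          ∑ j ∈ Finset.range (N + 1), x (T k + (j : ℝ) * (T (k + 1) - T k) / (N : ℝ)))
        - ∫ t in (0 : ℝ)..tf, x t|
      ≤ Ct ^ 3 / (8 * (K : ℝ) ^ 2 * (N : ℝ)) *
          sSup ((fun τ => |iteratedDerivWithin 2 x (Set.Icc 0 tf) τ|) '' Set.Icc 0 tf) := by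
  set S := Icc 0 tf
  set M := sSup ((fun τ => |iteratedDerivWithin 2 x S τ|) '' S)
  have hM : ∀ u ∈ S, |iteratedDerivWithin 2 x S u| ≤ M := fun u hu =>
    le_csSup (isCompact_Icc.bddAbove_image
      (hx.continuousOn_iteratedDerivWithin le_rfl (uniqueDiffOn_Icc htf)).abs)
      (mem_image_of_mem _ hu)
  have hM0 : 0 ≤ M := (abs_nonneg _).trans (hM 0 (left_mem_Icc.2 htf.le))
  have hcomposite := abs_sum_bernsteinQuadrature_sub_integral_le (Nat.one_le_iff_ne_zero.1 hN)
    (fun k hk => (hmono k hk).le) (by rw [hT0, hTK]; exact hx.continuousOn) (by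
      rw [hT0, hTK]
      exact fun t ht r hr => hx.abs_sub_sub_derivWithin_mul_le htf hM ht hr)
  rw [hT0, hTK] at hcomposite
  refine hcomposite.trans ?_
  calc ∑ k ∈ range K, M * (T (k + 1) - T k) ^ 3 / (8 * N)
      ≤ ∑ k ∈ range K, M * (Ct / K) ^ 3 / (8 * N) := by
        refine sum_le_sum fun k hk => ?_
        have hk := mem_range.1 hk
        have := sub_nonneg.2 (hmono k hk).le
        gcongr
        exact hsize k hk
    _ = Ct ^ 3 / (8 * (K : ℝ) ^ 2 * (N : ℝ)) * M := by
        rw [sum_const, card_range, nsmul_eq_mul]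
        field_simp

/-- composite Bernstein quadrature error bound. For `x ∈ C²([0,t_f])` and
knots `0 = T 0 < … < T K = t_f` with `T (k+1) − T k ≤ C_t/K`,
`| Σ_{k=1}^K ((t_k−t_{k−1})/(N+1)) Σ_{j=0}^N x(t_{k,j}) − ∫₀^{t_f} x |
  ≤ (C_t³/(8K²N)) sup_{τ∈[0,t_f]} |x''(τ)|`,
where `t_{k,j} = t_{k−1} + (j/N)(t_k − t_{k−1})`. -/
theorem composite_bernstein_quadrature_bound
    (tf Ct : ℝ) (htf : 0 < tf) (hCt : 0 < Ct)
    (K N : ℕ) (hK : 1 ≤ K) (hN : 1 ≤ N)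
    (T : ℕ → ℝ) (hT0 : T 0 = 0) (hTK : T K = tf)
    (hmono : ∀ k < K, T k < T (k + 1))
    (hsize : ∀ k < K, T (k + 1) - T k ≤ Ct / (K : ℝ))
    (x : ℝ → ℝ) (hx : ContDiffOn ℝ 2 x (Set.Icc 0 tf)) :
    |(∑ k ∈ Finset.range K, (T (k + 1) - T k) / ((N : ℝ) + 1) *
          ∑ j ∈ Finset.range (N + 1), x (T k + (j : ℝ) * (T (k + 1) - T k) / (N : ℝ)))
        - ∫ t in (0 : ℝ)..tf, x t|
      ≤ Ct ^ 3 / (8 * (K : ℝ) ^ 2 * (N : ℝ)) *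
          sSup ((fun τ => |iteratedDerivWithin 2 x (Set.Icc 0 tf) τ|) '' Set.Icc 0 tf) :=
  composite_bernstein_quadrature_bound_general tf Ct htf K N hN T hT0 hTK hmono hsize x hx
end
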